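/- Let (α, ≤) be a lattice. The collection of finite reduced subsets of α, ordered by the Hoare order ⊑, forms a lattice: ⊑ is a partial order on finite reduced subsets, and every pair D1, D2 of finite reduced subsets has a least upper bound (namely reduce(D1 ∪ D2)) and a greatest lower bound (namely reduce({t1 ⊓ t2 | t1 ∈ D1, t2 ∈ D2})) among finite reduced subsets. -/

import Mathlib

/-- The Hoare order between sets. -/
def hoare {α : Type*} [Preorder α] (D1 D2 : Set α) : Prop :=
  ∀ t1 ∈ D1, ∃ t2 ∈ D2, t1 ≤ t2

/-- A set is reduced if no two distinct elements are comparable. -/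
def reducedSet {α : Type*} [Preorder α] (D : Set α) : Prop :=
  ∀ t1 ∈ D, ∀ t2 ∈ D, t1 ≤ t2 → t1 = t2

/-- The reduced version of a set: its maximal elements. -/
def reduce {α : Type*} [Preorder α] (D : Set α) : Set α :=
  {t ∈ D | ∀ t' ∈ D, t ≤ t' → t = t'}

/-- A finite reduced subset of `α`. -/
def finRed {α : Type*} [Preorder α] (D : Set α) : Prop :=
  D.Finite ∧ reducedSet D

/-!
Every element of a finite set lies below a maximal one, so a finite set and its reduct dominate
each other; hence `reduce` only changes a set up to Hoare equivalence, and on reduced sets Hoare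
equivalence is equality. The join is then the reduct of the union, since `⊑`-upper bounds of
`D1 ∪ D2` are exactly the common upper bounds; the meet is the reduct of the pairwise infima,
since an element below some `t1 ∈ D1` and some `t2 ∈ D2` lies below `t1 ⊓ t2`.
-/

open Set

section Preorder

variable {α : Type*} [Preorder α] {A B C D : Set α}

lemma hoare_refl (D : Set α) : hoare D D :=
  fun t ht => ⟨t, ht, le_rfl⟩

lemma hoare_trans (hAB : hoare A B) (hBC : hoare B C) : hoare A C := by
  intro t ht
  obtain ⟨u, hu, htu⟩ := hAB t ht
  obtain ⟨v, hv, huv⟩ := hBC u hu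
  exact ⟨v, hv, htu.trans huv⟩

lemma hoare_of_subset (h : A ⊆ B) : hoare A B :=
  fun t ht => ⟨t, h ht, le_rfl⟩

lemma hoare_union (hA : hoare A C) (hB : hoare B C) : hoare (A ∪ B) C := by
  rintro t (ht | ht)
  exacts [hA t ht, hB t ht]

lemma reduce_subset (D : Set α) : reduce D ⊆ D :=
  fun _ ht => ht.1

lemma hoare_reduce_left (h : hoare D A) : hoare (reduce D) A :=
  hoare_trans (hoare_of_subset (reduce_subset D)) h

lemma reducedSet_reduce (D : Set α) : reducedSet (reduce D) :=
  fun _ h1 t2 h2 hle => h1.2 t2 h2.1 hle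

end Preorder

section PartialOrder

variable {α : Type*} [PartialOrder α] {A B D : Set α}

lemma subset_of_hoare_of_reducedSet (hA : reducedSet A) (hAB : hoare A B) (hBA : hoare B A) :
    A ⊆ B := by
  intro t ht
  obtain ⟨u, hu, htu⟩ := hAB t ht
  obtain ⟨v, hv, huv⟩ := hBA u hu
  obtain rfl : t = v := hA t ht v hv (htu.trans huv)
  rwa [le_antisymm htu huv]

lemma hoare_antisymm (hA : reducedSet A) (hB : reducedSet B) (hAB : hoare A B)
    (hBA : hoare B A) : A = B :=
  (subset_of_hoare_of_reducedSet hA hAB hBA).antisymm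
    (subset_of_hoare_of_reducedSet hB hBA hAB)

lemma hoare_self_reduce (hD : D.Finite) : hoare D (reduce D) := by
  intro t ht
  obtain ⟨m, ⟨hmD, htm⟩, hmax⟩ :=
    (hD.subset fun _ hx => hx.1 : {x ∈ D | t ≤ x}.Finite).exists_maximalFor id _ ⟨t, ht, le_rfl⟩
  refine ⟨m, ⟨hmD, fun u hu hmu => ?_⟩, htm⟩
  exact hmu.antisymm (hmax ⟨hu, htm.trans hmu⟩ hmu)

lemma hoare_reduce_right (hD : D.Finite) (h : hoare A D) : hoare A (reduce D) :=
  hoare_trans h (hoare_self_reduce hD)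

lemma finRed_reduce (hD : D.Finite) : finRed (reduce D) :=
  ⟨hD.subset (reduce_subset D), reducedSet_reduce D⟩

end PartialOrder

section SemilatticeInf

variable {α : Type*} [SemilatticeInf α] {A B C : Set α}

lemma hoare_image2_inf_left (A B : Set α) : hoare (image2 (· ⊓ ·) A B) A := by
  rintro _ ⟨a, ha, b, -, rfl⟩
  exact ⟨a, ha, inf_le_left⟩

lemma hoare_image2_inf_right (A B : Set α) : hoare (image2 (· ⊓ ·) A B) B := by
  rintro _ ⟨a, -, b, hb, rfl⟩
  exact ⟨b, hb, inf_le_right⟩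

lemma hoare_image2_inf (hA : hoare C A) (hB : hoare C B) : hoare C (image2 (· ⊓ ·) A B) := by
  intro t ht
  obtain ⟨a, ha, hta⟩ := hA t ht
  obtain ⟨b, hb, htb⟩ := hB t ht
  exact ⟨a ⊓ b, mem_image2_of_mem ha hb, le_inf hta htb⟩

end SemilatticeInf

/-- The finite reduced subsets of a lattice, ordered by the Hoare order,
form a lattice: the Hoare order is a partial order on them, and every pair
has a least upper bound `reduce (D1 ∪ D2)` and a greatest lower bound
`reduce {t1 ⊓ t2 | t1 ∈ D1, t2 ∈ D2}`, both of which are again finite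
reduced subsets. -/
theorem finite_reduced_sets_form_lattice {α : Type*} [Lattice α] :
    (∀ D : Set α, finRed D → hoare D D) ∧
    (∀ D1 D2 D3 : Set α, finRed D1 → finRed D2 → finRed D3 →
      hoare D1 D2 → hoare D2 D3 → hoare D1 D3) ∧
    (∀ D1 D2 : Set α, finRed D1 → finRed D2 →
      hoare D1 D2 → hoare D2 D1 → D1 = D2) ∧
    (∀ D1 D2 : Set α, finRed D1 → finRed D2 →
      finRed (reduce (D1 ∪ D2)) ∧
      hoare D1 (reduce (D1 ∪ D2)) ∧
      hoare D2 (reduce (D1 ∪ D2)) ∧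
      (∀ D' : Set α, finRed D' → hoare D1 D' → hoare D2 D' →
        hoare (reduce (D1 ∪ D2)) D')) ∧
    (∀ D1 D2 : Set α, finRed D1 → finRed D2 →
      finRed (reduce {t : α | ∃ t1 ∈ D1, ∃ t2 ∈ D2, t = t1 ⊓ t2}) ∧
      hoare (reduce {t : α | ∃ t1 ∈ D1, ∃ t2 ∈ D2, t = t1 ⊓ t2}) D1 ∧
      hoare (reduce {t : α | ∃ t1 ∈ D1, ∃ t2 ∈ D2, t = t1 ⊓ t2}) D2 ∧
      (∀ D' : Set α, finRed D' → hoare D' D1 → hoare D' D2 →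
        hoare D' (reduce {t : α | ∃ t1 ∈ D1, ∃ t2 ∈ D2, t = t1 ⊓ t2}))) := by
  refine ⟨fun D _ => hoare_refl D, fun _ _ _ _ _ _ => hoare_trans,
    fun _ _ h1 h2 => hoare_antisymm h1.2 h2.2, fun D1 D2 h1 h2 => ?_, fun D1 D2 h1 h2 => ?_⟩
  · have hU : (D1 ∪ D2).Finite := h1.1.union h2.1
    exact ⟨finRed_reduce hU, hoare_reduce_right hU (hoare_of_subset subset_union_left),
      hoare_reduce_right hU (hoare_of_subset subset_union_right),
      fun _ _ hD1 hD2 => hoare_reduce_left (hoare_union hD1 hD2)⟩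
  · have hS : {t : α | ∃ t1 ∈ D1, ∃ t2 ∈ D2, t = t1 ⊓ t2} = image2 (· ⊓ ·) D1 D2 := by
      ext; simp only [mem_ofPred_eq, mem_image2, eq_comm]
    have hfin : (image2 (· ⊓ ·) D1 D2).Finite := h1.1.image2 _ h2.1
    rw [hS]
    exact ⟨finRed_reduce hfin, hoare_reduce_left (hoare_image2_inf_left D1 D2),
      hoare_reduce_left (hoare_image2_inf_right D1 D2),
      fun _ _ hD1 hD2 => hoare_reduce_right hfin (hoare_image2_inf hD1 hD2)⟩
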